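/- Let T be a finite tree with at least two vertices. If D_pr is the unique minimum paired-dominating set of T, then T has a unique minimum ev-dominating set M; moreover, M is the unique perfect matching of the induced subgraph T[D_pr] and V_T(M) = D_pr. -/

import Mathlib

/-!
In a tree, a vertex set has at most one perfect matching (a vertex of the symmetric difference of
two of them farthest from a fixed root would have two parents), so `T[D_pr]` has a unique perfect
matching `M₀`, and `M₀` ev-dominates `T`. An ev-dominating set `N` whose edges are pairwise
disjoint spans a paired-dominating set of size `2 |N| ≤ 2 |M₀| = |D_pr|`; if `N` is minimum, that
set is a minimum paired-dominating set, hence `D_pr`, and so `N = M₀`.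

Root the tree. If two edges `s(v, u)`, `s(v, w)` of a minimum ev-dominating set share `v`, with `w`
a child of `v`, then `w` has a child `x` (else `s(v, w)` is redundant), and sliding `s(v, w)` to
`s(w, x)` gives a minimum ev-dominating set of larger total depth. Hence a minimum set of maximal
depth has disjoint edges, so `M₀` is minimum. If some minimum set had a shared vertex, take such a
set of maximal depth: its slide is disjoint, hence `M₀`; but then either `s(v, u)` is redundant, or
`u` has a neighbour `y ≠ v` on no other edge, and sliding `s(v, u)` to `s(u, y)` instead gives a
second minimum set with disjoint edges, which is impossible.
-/

open SimpleGraph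

variable {V : Type*}

/-- `D` is a dominating set of `G`: every vertex outside `D` has a neighbor in `D`. -/
def IsDomSet (G : SimpleGraph V) (D : Set V) : Prop :=
  ∀ v ∉ D, ∃ u ∈ D, G.Adj u v

/-- The edge `e` ev-dominates the vertex `v`: `e` is incident to `v` or to a neighbor of `v`. -/
def EvDom (G : SimpleGraph V) (e : Sym2 V) (v : V) : Prop :=
  v ∈ e ∨ ∃ u ∈ e, G.Adj u v

/-- `M` is an edge-vertex dominating set of `G`. -/
def IsEvDomSet (G : SimpleGraph V) (M : Set (Sym2 V)) : Prop :=
  M ⊆ G.edgeSet ∧ ∀ v : V, ∃ e ∈ M, EvDom G e v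

/-- `M` is a minimum edge-vertex dominating set of `G`. -/
def IsMinEvDomSet (G : SimpleGraph V) (M : Set (Sym2 V)) : Prop :=
  IsEvDomSet G M ∧ ∀ M' : Set (Sym2 V), IsEvDomSet G M' → M.ncard ≤ M'.ncard

/-- The edge-vertex domination number `γ_ev(G)`. -/
noncomputable def evNum (G : SimpleGraph V) : ℕ :=
  sInf {n | ∃ M : Set (Sym2 V), IsEvDomSet G M ∧ M.ncard = n}

/-- The set of all endpoints of edges in `M`. -/
def edgeVerts (M : Set (Sym2 V)) : Set V := {v | ∃ e ∈ M, v ∈ e}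

/-- `M` is a perfect matching of the induced subgraph `G[D]`: a set of edges of `G`
with all endpoints in `D`, such that every vertex of `D` lies in exactly one edge of `M`. -/
def IsPMOn (G : SimpleGraph V) (D : Set V) (M : Set (Sym2 V)) : Prop :=
  M ⊆ G.edgeSet ∧ (∀ e ∈ M, ∀ v ∈ e, v ∈ D) ∧ ∀ v ∈ D, ∃! e, e ∈ M ∧ v ∈ e

/-- `D` is a paired-dominating set of `G`. -/
def IsPairedDomSet (G : SimpleGraph V) (D : Set V) : Prop :=
  IsDomSet G D ∧ ∃ M : Set (Sym2 V), IsPMOn G D M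

/-- `D` is a minimum paired-dominating set of `G`. -/
def IsMinPairedDomSet (G : SimpleGraph V) (D : Set V) : Prop :=
  IsPairedDomSet G D ∧ ∀ D' : Set V, IsPairedDomSet G D' → D.ncard ≤ D'.ncard

/-- The paired-domination number `γ_pr(G)`. -/
noncomputable def prNum (G : SimpleGraph V) : ℕ :=
  sInf {n | ∃ D : Set V, IsPairedDomSet G D ∧ D.ncard = n}

/-- No two distinct edges of `M` share a vertex. -/
def NoSharedVertex (M : Set (Sym2 V)) : Prop :=
  ∀ e ∈ M, ∀ f ∈ M, e ≠ f → ∀ v : V, v ∈ e → v ∉ f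

/-- `G` has no isolated vertex. -/
def NoIsolated (G : SimpleGraph V) : Prop := ∀ v : V, ∃ u, G.Adj u v

namespace SimpleGraph

variable {G : SimpleGraph V}

theorem IsTree.eq_of_adj_of_dist_add_one (hT : G.IsTree) (r : V) {v c c' : V}
    (hc : G.Adj c v) (hc' : G.Adj c' v) (h : G.dist r c + 1 = G.dist r v)
    (h' : G.dist r c' + 1 = G.dist r v) : c = c' := by
  classical
  have geodesic_concat : ∀ {c}, G.Adj c v → G.dist r c + 1 = G.dist r v →
      ∃ p : G.Walk r v, p.IsPath ∧ p.penultimate = c := by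
    intro c hc h
    obtain ⟨p, hp, hlen⟩ := hT.connected.exists_path_of_dist r c
    have hv : v ∉ p.support := fun hv => by
      have := G.dist_le (p.takeUntil v hv)
      have := p.length_takeUntil_le_length hv
      omega
    exact ⟨p.concat hc, hp.concat hv hc, p.penultimate_concat hc⟩
  obtain ⟨p, hp, rfl⟩ := geodesic_concat hc h
  obtain ⟨p', hp', rfl⟩ := geodesic_concat hc' h'
  rw [Subtype.mk.inj (hT.isAcyclic.subsingleton_path r v |>.elim ⟨p, hp⟩ ⟨p', hp'⟩)]

theorem IsTree.dist_eq_add_one_of_adj_of_ne (hT : G.IsTree) (r : V) {v w x : V}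
    (hvw : G.Adj v w) (hw : G.dist r w = G.dist r v + 1) (hwx : G.Adj w x) (hxv : x ≠ v) :
    G.dist r x = G.dist r w + 1 := by
  rcases hT.dist_eq_dist_add_one_of_adj r hwx with h | h
  · exact absurd (hT.eq_of_adj_of_dist_add_one r hwx.symm hvw h.symm hw.symm) hxv
  · exact h

theorem IsTree.exists_mem_neighborSet_inter_subsingleton (hT : G.IsTree) {S : Set V}
    (hS : S.Finite) (hne : S.Nonempty) : ∃ b ∈ S, (G.neighborSet b ∩ S).Subsingleton := by
  obtain ⟨r, -⟩ := id hne
  obtain ⟨b, hb, hmax⟩ := Set.exists_max_image S (G.dist r) hS hne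
  have parent : ∀ c ∈ S, G.Adj b c → G.dist r c + 1 = G.dist r b := fun c hc hbc => by
    have := hmax c hc
    rcases hT.dist_eq_dist_add_one_of_adj r hbc with h | h <;> omega
  refine ⟨b, hb, fun c ⟨hbc, hc⟩ c' ⟨hbc', hc'⟩ => ?_⟩
  exact hT.eq_of_adj_of_dist_add_one r hbc.symm hbc'.symm (parent c hc hbc) (parent c' hc' hbc')

end SimpleGraph

section EdgeSets

variable {G : SimpleGraph V} {D : Set V} {M N : Set (Sym2 V)}

theorem IsPMOn.noSharedVertex (h : IsPMOn G D M) : NoSharedVertex M := by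
  intro e he f hf hne v hve hvf
  obtain ⟨g, -, hg⟩ := h.2.2 v (h.2.1 e he v hve)
  exact hne ((hg e ⟨he, hve⟩).trans (hg f ⟨hf, hvf⟩).symm)

theorem IsPMOn.edgeVerts_eq (h : IsPMOn G D M) : edgeVerts M = D := by
  ext v
  refine ⟨fun ⟨e, he, hv⟩ => h.2.1 e he v hv, fun hv => ?_⟩
  obtain ⟨e, ⟨he, hve⟩, -⟩ := h.2.2 v hv
  exact ⟨e, he, hve⟩

theorem isPMOn_edgeVerts (hM : M ⊆ G.edgeSet) (hsh : NoSharedVertex M) :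
    IsPMOn G (edgeVerts M) M := by
  refine ⟨hM, fun e he v hv => ⟨e, he, hv⟩, fun v ⟨e, he, hve⟩ => ⟨e, ⟨he, hve⟩, ?_⟩⟩
  rintro f ⟨hf, hvf⟩
  by_contra hne
  exact hsh f hf e he hne v hvf hve

theorem ncard_edgeVerts (hM : M ⊆ G.edgeSet) (hfin : M.Finite) (hsh : NoSharedVertex M) :
    (edgeVerts M).ncard = 2 * M.ncard := by
  classical
  have hverts : edgeVerts M = ↑(hfin.toFinset.biUnion Sym2.toFinset) := by
    ext v
    simp [edgeVerts, Sym2.mem_toFinset]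
  rw [hverts, Set.ncard_coe_finset, Finset.card_biUnion, Set.ncard_eq_toFinset_card M hfin,
    Finset.sum_congr rfl fun e he => Sym2.card_toFinset_of_not_isDiag e
      (G.not_isDiag_of_mem_edgeSet (hM (hfin.mem_toFinset.mp he))), Finset.sum_const, smul_eq_mul,
    mul_comm]
  intro e he f hf hne
  refine Finset.disjoint_left.mpr fun v hve hvf => ?_
  exact hsh e (hfin.mem_toFinset.mp he) f (hfin.mem_toFinset.mp hf) hne v
    (Sym2.mem_toFinset.mp hve) (Sym2.mem_toFinset.mp hvf)

theorem IsPMOn.ncard_eq [Finite V] (h : IsPMOn G D M) : D.ncard = 2 * M.ncard := by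
  rw [← h.edgeVerts_eq]
  exact ncard_edgeVerts h.1 M.toFinite h.noSharedVertex

theorem IsPMOn.isEvDomSet (h : IsPMOn G D M) (hD : IsDomSet G D) : IsEvDomSet G M := by
  refine ⟨h.1, fun z => ?_⟩
  by_cases hz : z ∈ D
  · obtain ⟨e, ⟨he, hze⟩, -⟩ := h.2.2 z hz
    exact ⟨e, he, Or.inl hze⟩
  · obtain ⟨u, hu, huz⟩ := hD z hz
    obtain ⟨e, ⟨he, hue⟩, -⟩ := h.2.2 u hu
    exact ⟨e, he, Or.inr ⟨u, hue, huz⟩⟩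

theorem IsEvDomSet.isDomSet_edgeVerts (h : IsEvDomSet G M) : IsDomSet G (edgeVerts M) := by
  intro z hz
  obtain ⟨e, he, hze | ⟨u, hue, huz⟩⟩ := h.2 z
  · exact absurd ⟨e, he, hze⟩ hz
  · exact ⟨u, ⟨e, he, hue⟩, huz⟩

theorem IsPMOn.exists_adj_adj_of_mem_sdiff {M' : Set (Sym2 V)} (h : IsPMOn G D M)
    (h' : IsPMOn G D M') {e : Sym2 V} (he : e ∈ M \ M') {b : V} (hb : b ∈ e) :
    ∃ c c', c ≠ c' ∧ G.Adj b c ∧ G.Adj b c' ∧ s(b, c) ∈ M \ M' ∧ s(b, c') ∈ M' \ M := by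
  have hbD := h.2.1 e he.1 b hb
  obtain ⟨f, ⟨hf, hbf⟩, -⟩ := h'.2.2 b hbD
  have hfM : f ∉ M := fun hfM => he.2 ((h.2.2 b hbD).unique ⟨he.1, hb⟩ ⟨hfM, hbf⟩ ▸ hf)
  obtain ⟨c, rfl⟩ := Sym2.mem_iff_exists.mp hb
  obtain ⟨c', rfl⟩ := Sym2.mem_iff_exists.mp hbf
  refine ⟨c, c', ?_, G.mem_edgeSet.mp (h.1 he.1), G.mem_edgeSet.mp (h'.1 hf), he, hf, hfM⟩
  rintro rfl
  exact he.2 hf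

theorem IsPMOn.eq_of_isTree [Finite V] {M' : Set (Sym2 V)} (hT : G.IsTree) (h : IsPMOn G D M)
    (h' : IsPMOn G D M') : M = M' := by
  by_contra hne
  set S := edgeVerts (M \ M' ∪ M' \ M)
  have two_nbrs : ∀ b ∈ S, ∃ c ∈ S, ∃ c' ∈ S, c ≠ c' ∧ G.Adj b c ∧ G.Adj b c' := by
    rintro b ⟨e, he | he, hb⟩
    · obtain ⟨c, c', hcc', hc, hc', hce, hce'⟩ := h.exists_adj_adj_of_mem_sdiff h' he hb
      exact ⟨c, ⟨_, Or.inl hce, Sym2.mem_mk_right b c⟩,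
        c', ⟨_, Or.inr hce', Sym2.mem_mk_right b c'⟩, hcc', hc, hc'⟩
    · obtain ⟨c, c', hcc', hc, hc', hce, hce'⟩ := h'.exists_adj_adj_of_mem_sdiff h he hb
      exact ⟨c, ⟨_, Or.inr hce, Sym2.mem_mk_right b c⟩,
        c', ⟨_, Or.inl hce', Sym2.mem_mk_right b c'⟩, hcc', hc, hc'⟩
  have hS : S.Nonempty := by
    obtain ⟨e, he⟩ : (M \ M' ∪ M' \ M).Nonempty := by
      rw [Set.nonempty_iff_ne_empty, Ne, Set.union_empty_iff, Set.sdiff_eq_empty,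
        Set.sdiff_eq_empty]
      exact fun hMM => hne (hMM.1.antisymm hMM.2)
    exact ⟨e.out.1, e, he, Sym2.out_fst_mem e⟩
  obtain ⟨b, hb, hsub⟩ := hT.exists_mem_neighborSet_inter_subsingleton S.toFinite hS
  obtain ⟨c, hc, c', hc', hcc', hbc, hbc'⟩ := two_nbrs b hb
  exact hcc' (hsub ⟨hbc, hc⟩ ⟨hbc', hc'⟩)

end EdgeSets

section EvDomination

variable {G : SimpleGraph V} {N : Set (Sym2 V)}

theorem IsEvDomSet.exists_isMinEvDomSet [Finite V] (h : IsEvDomSet G N) :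
    ∃ M, IsMinEvDomSet G M := by
  obtain ⟨M, hM, hmin⟩ := Set.exists_min_image {M | IsEvDomSet G M} Set.ncard
    (Set.toFinite _) ⟨N, h⟩
  exact ⟨M, hM, hmin⟩

theorem IsMinEvDomSet.not_isEvDomSet_sdiff [Finite V] (hN : IsMinEvDomSet G N) {f : Sym2 V}
    (hf : f ∈ N) : ¬ IsEvDomSet G (N \ {f}) :=
  fun h => (Set.ncard_sdiff_singleton_lt_of_mem hf).not_ge (hN.2 _ h)

theorem IsEvDomSet.sdiff_of_neighbors_covered (hN : IsEvDomSet G N) {v a c : V}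
    (ha : s(v, a) ∈ N) (hc : s(v, c) ∈ N) (hac : a ≠ c)
    (hcov : ∀ y, G.Adj c y → y ≠ v → ∃ g ∈ N, g ≠ s(v, c) ∧ y ∈ g) :
    IsEvDomSet G (N \ {s(v, c)}) := by
  have hvc : G.Adj v c := G.mem_edgeSet.mp (hN.1 hc)
  have ha' : s(v, a) ∈ N \ {s(v, c)} := ⟨ha, fun h => hac (Sym2.congr_right.mp h)⟩
  refine ⟨Set.sdiff_subset.trans hN.1, fun z => ?_⟩
  obtain ⟨e, he, hez⟩ := hN.2 z
  by_cases hec : e = s(v, c)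
  · subst hec
    rcases hez with hz | ⟨q, hq, hqz⟩
    · rcases Sym2.mem_iff.mp hz with rfl | rfl
      · exact ⟨_, ha', Or.inl (Sym2.mem_mk_left z a)⟩
      · exact ⟨_, ha', Or.inr ⟨v, Sym2.mem_mk_left v a, hvc⟩⟩
    · rcases Sym2.mem_iff.mp hq with rfl | rfl
      · exact ⟨_, ha', Or.inr ⟨q, Sym2.mem_mk_left q a, hqz⟩⟩
      · by_cases hzv : z = v
        · exact ⟨_, ha', Or.inl (hzv ▸ Sym2.mem_mk_left v a)⟩
        · obtain ⟨g, hg, hgc, hzg⟩ := hcov z hqz hzv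
          exact ⟨g, ⟨hg, hgc⟩, Or.inl hzg⟩
  · exact ⟨e, ⟨he, hec⟩, hez⟩

theorem IsEvDomSet.exchange (hN : IsEvDomSet G N) {v a c x : V} (ha : s(v, a) ∈ N)
    (hc : s(v, c) ∈ N) (hac : a ≠ c) (hcx : G.Adj c x) :
    IsEvDomSet G (insert s(c, x) (N \ {s(v, c)})) := by
  have ha' : s(v, a) ∈ insert s(c, x) (N \ {s(v, c)}) :=
    Or.inr ⟨ha, fun h => hac (Sym2.congr_right.mp h)⟩
  have hx : s(c, x) ∈ insert s(c, x) (N \ {s(v, c)}) := Set.mem_insert _ _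
  refine ⟨Set.insert_subset (G.mem_edgeSet.mpr hcx) (Set.sdiff_subset.trans hN.1), fun z => ?_⟩
  obtain ⟨e, he, hez⟩ := hN.2 z
  by_cases hec : e = s(v, c)
  · subst hec
    rcases hez with hz | ⟨q, hq, hqz⟩
    · rcases Sym2.mem_iff.mp hz with rfl | rfl
      · exact ⟨_, ha', Or.inl (Sym2.mem_mk_left z a)⟩
      · exact ⟨_, hx, Or.inl (Sym2.mem_mk_left z x)⟩
    · rcases Sym2.mem_iff.mp hq with rfl | rfl
      · exact ⟨_, ha', Or.inr ⟨q, Sym2.mem_mk_left q a, hqz⟩⟩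
      · exact ⟨_, hx, Or.inr ⟨q, Sym2.mem_mk_left q x, hqz⟩⟩
  · exact ⟨e, Or.inr ⟨he, hec⟩, hez⟩

theorem IsMinEvDomSet.exchange [Finite V] (hN : IsMinEvDomSet G N) {v a c x : V}
    (ha : s(v, a) ∈ N) (hc : s(v, c) ∈ N) (hac : a ≠ c) (hcx : G.Adj c x) (hxv : x ≠ v) :
    s(c, x) ∉ N ∧ IsMinEvDomSet G (insert s(c, x) (N \ {s(v, c)})) := by
  have hev := hN.1.exchange ha hc hac hcx
  have hnew : s(c, x) ∉ N := fun hcxN => by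
    refine hN.not_isEvDomSet_sdiff hc ?_
    have hmem : s(c, x) ∈ N \ {s(v, c)} :=
      ⟨hcxN, fun h => hxv (Sym2.congr_right.mp (h.trans Sym2.eq_swap))⟩
    rwa [Set.insert_eq_of_mem hmem] at hev
  refine ⟨hnew, hev, fun M hM => ?_⟩
  rw [Set.ncard_exchange hnew hc]
  exact hN.2 M hM

end EvDomination

namespace SimpleGraph

variable {G : SimpleGraph V}

theorem IsTree.exists_shared_child (hT : G.IsTree) (r : V) {N : Set (Sym2 V)}
    (hN : N ⊆ G.edgeSet) (h : ¬ NoSharedVertex N) :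
    ∃ v u w, s(v, u) ∈ N ∧ s(v, w) ∈ N ∧ u ≠ w ∧ G.dist r w = G.dist r v + 1 := by
  simp only [NoSharedVertex, not_forall, not_not] at h
  obtain ⟨e, he, f, hf, hef, q, hqe, hqf⟩ := h
  obtain ⟨a, rfl⟩ := Sym2.mem_iff_exists.mp hqe
  obtain ⟨b, rfl⟩ := Sym2.mem_iff_exists.mp hqf
  have hab : a ≠ b := by rintro rfl; exact hef rfl
  have hqa := G.mem_edgeSet.mp (hN he)
  have hqb := G.mem_edgeSet.mp (hN hf)
  rcases hT.dist_eq_dist_add_one_of_adj r hqb with hb | hb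
  · rcases hT.dist_eq_dist_add_one_of_adj r hqa with ha | ha
    · exact absurd (hT.eq_of_adj_of_dist_add_one r hqa.symm hqb.symm ha.symm hb.symm) hab
    · exact ⟨q, b, a, hf, he, hab.symm, ha⟩
  · exact ⟨q, a, b, he, hf, hab, hb⟩

end SimpleGraph

section Depth

variable {G : SimpleGraph V} {N : Set (Sym2 V)}

noncomputable def edgeDepth (G : SimpleGraph V) (r : V) : Sym2 V → ℕ :=
  Sym2.lift ⟨fun a b => G.dist r a + G.dist r b, fun _ _ => Nat.add_comm _ _⟩

noncomputable def depth (G : SimpleGraph V) (r : V) (N : Set (Sym2 V)) : ℕ :=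
  ∑ᶠ e ∈ N, edgeDepth G r e

theorem depth_exchange [Finite V] (r : V) {e f : Sym2 V} (hf : f ∈ N) (he : e ∉ N) :
    depth G r (insert e (N \ {f})) + edgeDepth G r f = depth G r N + edgeDepth G r e := by
  unfold depth
  conv_rhs => rw [← Set.insert_sdiff_self_of_mem hf]
  rw [finsum_mem_insert _ (fun h => he h.1) N.toFinite.sdiff,
    finsum_mem_insert (s := N \ {f}) _ (fun h => h.2 rfl) N.toFinite.sdiff]
  omega

theorem IsMinEvDomSet.exists_push [Finite V] (hT : G.IsTree) (r : V) (hN : IsMinEvDomSet G N)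
    {v u w : V} (hvu : s(v, u) ∈ N) (hvw : s(v, w) ∈ N) (huw : u ≠ w)
    (hw : G.dist r w = G.dist r v + 1) :
    ∃ x, G.Adj w x ∧ x ≠ v ∧ IsMinEvDomSet G (insert s(w, x) (N \ {s(v, w)})) ∧
      depth G r N < depth G r (insert s(w, x) (N \ {s(v, w)})) := by
  obtain ⟨x, hwx, hxv⟩ : ∃ x, G.Adj w x ∧ x ≠ v := by
    by_contra! hleaf
    exact hN.not_isEvDomSet_sdiff hvw <| hN.1.sdiff_of_neighbors_covered hvu hvw huw
      fun y hwy hyv => absurd (hleaf y hwy) hyv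
  have hx := hT.dist_eq_add_one_of_adj_of_ne r (G.mem_edgeSet.mp (hN.1.1 hvw)) hw hwx hxv
  obtain ⟨hnew, hmin⟩ := hN.exchange hvu hvw huw hwx hxv
  refine ⟨x, hwx, hxv, hmin, ?_⟩
  have := depth_exchange (G := G) r hvw hnew
  simp only [edgeDepth, Sym2.lift_mk] at this
  omega

end Depth

section Uniqueness

variable {G : SimpleGraph V} {N : Set (Sym2 V)}

theorem NoSharedVertex.exchange_swap {v u w x y : V}
    (hNx : NoSharedVertex (insert s(w, x) (N \ {s(v, w)})))
    (hvu : s(v, u) ∈ N) (hvw : s(v, w) ∈ N) (hvu_ne : v ≠ u) (huw : u ≠ w) (hwxN : s(w, x) ∉ N)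
    (hy : ∀ g ∈ N, g ≠ s(v, u) → y ∉ g) :
    NoSharedVertex (insert s(u, y) (N \ {s(v, u)})) := by
  have hvu_vw : s(v, u) ≠ s(v, w) := fun h => huw (Sym2.congr_right.mp h)
  have hsep : ∀ g ∈ N, ∀ h ∈ N, g ≠ s(v, w) → h ≠ s(v, w) → g ≠ h → ∀ q ∈ g, q ∉ h :=
    fun g hg h hh hgw hhw => hNx g (Or.inr ⟨hg, hgw⟩) h (Or.inr ⟨hh, hhw⟩)
  have hK : ∀ h ∈ N, h ≠ s(v, u) → h ≠ s(v, w) →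
      ∀ q, q = v ∨ q = u ∨ q = w ∨ q = y → q ∉ h := by
    intro h hh hhu hhw q hq hqh
    rcases hq with rfl | rfl | rfl | rfl
    · exact hsep _ hvu h hh hvu_vw hhw (Ne.symm hhu) q (Sym2.mem_mk_left q u) hqh
    · exact hsep _ hvu h hh hvu_vw hhw (Ne.symm hhu) q (Sym2.mem_mk_right v q) hqh
    · exact hNx _ (Set.mem_insert _ _) h (Or.inr ⟨hh, hhw⟩) (fun e => hwxN (e ▸ hh)) q
        (Sym2.mem_mk_left q x) hqh
    · exact hy h hh hhu hqh
  have hdisj : ∀ q ∈ s(u, y), q ∉ s(v, w) := by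
    intro q hq hqvw
    rcases Sym2.mem_iff.mp hq with rfl | rfl
    · rcases Sym2.mem_iff.mp hqvw with rfl | rfl
      · exact hvu_ne rfl
      · exact huw rfl
    · exact hy _ hvw hvu_vw.symm hqvw
  have hsplit : ∀ g ∈ insert s(u, y) (N \ {s(v, u)}),
      g = s(u, y) ∨ g = s(v, w) ∨ (g ∈ N ∧ g ≠ s(v, u) ∧ g ≠ s(v, w)) := by
    rintro g (rfl | ⟨hg, hgu⟩)
    · exact Or.inl rfl
    · by_cases hgw : g = s(v, w)
      · exact Or.inr (Or.inl hgw)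
      · exact Or.inr (Or.inr ⟨hg, hgu, hgw⟩)
  have hinner : ∀ g, (g = s(u, y) ∨ g = s(v, w) ∨ (g ∈ N ∧ g ≠ s(v, u) ∧ g ≠ s(v, w))) →
      ∀ h ∈ N, h ≠ s(v, u) → h ≠ s(v, w) → g ≠ h → ∀ q ∈ g, q ∉ h := by
    rintro g (rfl | rfl | ⟨hg, -, hgw⟩) h hh hhu hhw hgh q hq
    · exact hK h hh hhu hhw q (by rcases Sym2.mem_iff.mp hq with rfl | rfl <;> simp)
    · exact hK h hh hhu hhw q (by rcases Sym2.mem_iff.mp hq with rfl | rfl <;> simp)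
    · exact hsep g hg h hh hgw hhw hgh q hq
  intro g hg h hh hgh q hqg hqh
  rcases hsplit h hh with rfl | rfl | ⟨hhN, hhu, hhw⟩
  · rcases hsplit g hg with rfl | rfl | hgK
    · exact hgh rfl
    · exact hdisj q hqh hqg
    · exact hinner _ (Or.inl rfl) g hgK.1 hgK.2.1 hgK.2.2 (Ne.symm hgh) q hqh hqg
  · rcases hsplit g hg with rfl | rfl | hgK
    · exact hdisj q hqg hqh
    · exact hgh rfl
    · exact hinner _ (Or.inr (Or.inl rfl)) g hgK.1 hgK.2.1 hgK.2.2 (Ne.symm hgh) q hqh hqg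
  · exact hinner g (hsplit g hg) h hhN hhu hhw hgh q hqg hqh

theorem IsMinEvDomSet.not_noSharedVertex_exchange [Finite V]
    (hM : {M | IsMinEvDomSet G M ∧ NoSharedVertex M}.Subsingleton) (hN : IsMinEvDomSet G N)
    {v u w x : V} (hvu : s(v, u) ∈ N) (hvw : s(v, w) ∈ N) (huw : u ≠ w) (hwx : G.Adj w x)
    (hxv : x ≠ v) : ¬ NoSharedVertex (insert s(w, x) (N \ {s(v, w)})) := by
  intro hNx
  obtain ⟨hwxN, hNxmin⟩ := hN.exchange hvu hvw huw hwx hxv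
  obtain ⟨y, huy, hyv, hy⟩ : ∃ y, G.Adj u y ∧ y ≠ v ∧ ∀ g ∈ N, g ≠ s(v, u) → y ∉ g := by
    by_contra! hcov
    exact hN.not_isEvDomSet_sdiff hvu (hN.1.sdiff_of_neighbors_covered hvw hvu huw.symm hcov)
  obtain ⟨-, hNymin⟩ := hN.exchange hvw hvu huw.symm huy hyv
  have hNy := hNx.exchange_swap hvu hvw (G.mem_edgeSet.mp (hN.1.1 hvu)).ne huw hwxN hy
  have hvuNy : s(v, u) ∈ insert s(u, y) (N \ {s(v, u)}) := by
    rw [hM ⟨hNymin, hNy⟩ ⟨hNxmin, hNx⟩]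
    exact Or.inr ⟨hvu, fun h => huw (Sym2.congr_right.mp h)⟩
  rcases hvuNy with h | ⟨-, h⟩
  · exact hyv (Sym2.congr_right.mp (Sym2.eq_swap.trans h)).symm
  · exact h rfl

theorem exists_isMinEvDomSet_noSharedVertex [Finite V] (hT : G.IsTree) (hN : IsEvDomSet G N) :
    ∃ M, IsMinEvDomSet G M ∧ NoSharedVertex M := by
  obtain ⟨r⟩ := hT.connected.nonempty
  obtain ⟨M, hM, hmax⟩ := Set.exists_max_image {M | IsMinEvDomSet G M} (depth G r)
    (Set.toFinite _) hN.exists_isMinEvDomSet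
  refine ⟨M, hM, ?_⟩
  by_contra hsh
  obtain ⟨v, u, w, hvu, hvw, huw, hw⟩ := hT.exists_shared_child r hM.1.1 hsh
  obtain ⟨x, -, -, hMx, hlt⟩ := hM.exists_push hT r hvu hvw huw hw
  exact (hmax _ hMx).not_gt hlt

theorem IsMinEvDomSet.noSharedVertex [Finite V] (hT : G.IsTree)
    (hM : {M | IsMinEvDomSet G M ∧ NoSharedVertex M}.Subsingleton) (hN : IsMinEvDomSet G N) :
    NoSharedVertex N := by
  by_contra hsh
  obtain ⟨r⟩ := hT.connected.nonempty
  obtain ⟨N', ⟨hN', hsh'⟩, hmax⟩ := Set.exists_max_image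
    {M | IsMinEvDomSet G M ∧ ¬ NoSharedVertex M} (depth G r) (Set.toFinite _) ⟨N, hN, hsh⟩
  obtain ⟨v, u, w, hvu, hvw, huw, hw⟩ := hT.exists_shared_child r hN'.1.1 hsh'
  obtain ⟨x, hwx, hxv, hN'x, hlt⟩ := hN'.exists_push hT r hvu hvw huw hw
  refine hN'.not_noSharedVertex_exchange hM hvu hvw huw hwx hxv ?_
  by_contra hshx
  exact (hmax _ ⟨hN'x, hshx⟩).not_gt hlt

end Uniqueness

theorem IsMinPairedDomSet.eq_of_isMinEvDomSet_of_noSharedVertex [Finite V] {G : SimpleGraph V}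
    {D : Set V} {M N : Set (Sym2 V)} (hT : G.IsTree) (hD : IsMinPairedDomSet G D)
    (huniq : ∀ D' : Set V, IsMinPairedDomSet G D' → D' = D) (hM : IsPMOn G D M)
    (hN : IsMinEvDomSet G N) (hsh : NoSharedVertex N) : N = M := by
  have hNpm : IsPMOn G (edgeVerts N) N := isPMOn_edgeVerts hN.1.1 hsh
  have hcard : (edgeVerts N).ncard ≤ D.ncard := by
    calc (edgeVerts N).ncard = 2 * N.ncard := ncard_edgeVerts hN.1.1 N.toFinite hsh
      _ ≤ 2 * M.ncard := Nat.mul_le_mul_left 2 (hN.2 M (hM.isEvDomSet hD.1.1))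
      _ = D.ncard := hM.ncard_eq.symm
  have hmin : IsMinPairedDomSet G (edgeVerts N) :=
    ⟨⟨hN.1.isDomSet_edgeVerts, N, hNpm⟩, fun D' hD' => hcard.trans (hD.2 D' hD')⟩
  rw [huniq _ hmin] at hNpm
  exact hNpm.eq_of_isTree hT hM

theorem stmt9_general [Fintype V] (G : SimpleGraph V) (hT : G.IsTree)
    (Dpr : Set V) (hD : IsMinPairedDomSet G Dpr)
    (huniq : ∀ D' : Set V, IsMinPairedDomSet G D' → D' = Dpr) :
    ∃ M : Set (Sym2 V), IsMinEvDomSet G M ∧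
      (∀ M' : Set (Sym2 V), IsMinEvDomSet G M' → M' = M) ∧
      IsPMOn G Dpr M ∧ (∀ M' : Set (Sym2 V), IsPMOn G Dpr M' → M' = M) ∧
      edgeVerts M = Dpr := by
  obtain ⟨M, hM⟩ := hD.1.2
  have hunshared : ∀ N, IsMinEvDomSet G N → NoSharedVertex N → N = M :=
    fun N hN hsh => hD.eq_of_isMinEvDomSet_of_noSharedVertex hT huniq hM hN hsh
  obtain ⟨N, hNmin, hNsh⟩ := exists_isMinEvDomSet_noSharedVertex hT (hM.isEvDomSet hD.1.1)
  obtain rfl := hunshared N hNmin hNsh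
  have hsub : {M | IsMinEvDomSet G M ∧ NoSharedVertex M}.Subsingleton :=
    fun N₁ h₁ N₂ h₂ => (hunshared N₁ h₁.1 h₁.2).trans (hunshared N₂ h₂.1 h₂.2).symm
  exact ⟨N, hNmin, fun M' hM' => hunshared M' hM' (hM'.noSharedVertex hT hsub), hM,
    fun M' hM' => hM'.eq_of_isTree hT hM, hM.edgeVerts_eq⟩

theorem stmt9 [Fintype V] (G : SimpleGraph V) (hT : G.IsTree) (h2 : 2 ≤ Fintype.card V)
    (Dpr : Set V) (hD : IsMinPairedDomSet G Dpr)
    (huniq : ∀ D' : Set V, IsMinPairedDomSet G D' → D' = Dpr) :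
    ∃ M : Set (Sym2 V), IsMinEvDomSet G M ∧
      (∀ M' : Set (Sym2 V), IsMinEvDomSet G M' → M' = M) ∧
      IsPMOn G Dpr M ∧ (∀ M' : Set (Sym2 V), IsPMOn G Dpr M' → M' = M) ∧
      edgeVerts M = Dpr :=
  stmt9_general G hT Dpr hD huniq
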